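/- arXiv:1407.6065 — 7 statements merged into one kernel-verified Lean document; each statement's English description precedes it below -/
import Mathlib

section
/- Let z_1,…,z_d be complex numbers of modulus 1. Then the following are equivalent: (i) whenever c_1,…,c_d ∈ ℂ are such that the limit lim_{n→∞} (c_1 z_1^n + ⋯ + c_d z_d^n) exists, one has c_1 = ⋯ = c_d = 0; (ii) for every j ∈ {1,…,d}, z_j ≠ 1 and z_j ≠ z_k for all k ≠ j. -/
/-!
To recover `c k`, take Cesàro means of `a n * (z k)⁻¹ ^ n`, where `a n = ∑ j, c j * z j ^ n`.
On the unit circle, geometric sums of any `w ≠ 1` are bounded, so their Cesàro means vanish.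
If `a n` converges, this applies to `w = (z k)⁻¹` and the means tend to `0`. Expanding `a n`
instead, it applies to the ratios `z j / z k` with `j ≠ k`, and the means tend to `c k`.
Conversely, `z j = 1` or `z j = z k` yields a nonzero coefficient vector whose exponential sum
is constant.
-/

open Filter Finset Topology

section Cesaro

variable {𝕜 : Type*} [NormedField 𝕜] [NormedAlgebra ℝ 𝕜]

lemma tendsto_cesaro_pow_of_ne_one {w : 𝕜} (hw : ‖w‖ ≤ 1) (hw1 : w ≠ 1) :
    Tendsto (fun N : ℕ => (N : ℝ)⁻¹ • ∑ n ∈ range N, w ^ n) atTop (𝓝 0) := by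
  have hw1' : 0 < ‖w - 1‖ := norm_pos_iff.mpr (sub_ne_zero.mpr hw1)
  refine squeeze_zero_norm (fun N => ?_)
    (by simpa using tendsto_inv_atTop_nhds_zero_nat.mul_const (2 / ‖w - 1‖))
  have hpow : ‖w ^ N - 1‖ ≤ 2 := calc
    ‖w ^ N - 1‖ ≤ ‖w‖ ^ N + 1 := by simpa [norm_pow] using norm_sub_le (w ^ N) 1
    _ ≤ 2 := by linarith [pow_le_one₀ (n := N) (norm_nonneg w) hw]
  rw [norm_smul, geom_sum_eq hw1, norm_div, norm_inv, Real.norm_natCast]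
  gcongr

lemma tendsto_cesaro_pow [DecidableEq 𝕜] {w : 𝕜} (hw : ‖w‖ ≤ 1) :
    Tendsto (fun N : ℕ => (N : ℝ)⁻¹ • ∑ n ∈ range N, w ^ n) atTop
      (𝓝 (if w = 1 then 1 else 0)) := by
  split_ifs with hw1
  · simpa [hw1] using (tendsto_const_nhds (x := (1 : 𝕜))).cesaro_smul
  · exact tendsto_cesaro_pow_of_ne_one hw hw1

lemma tendsto_cesaro_mul_pow_of_tendsto {a : ℕ → 𝕜} {l w : 𝕜} (ha : Tendsto a atTop (𝓝 l))
    (hw : ‖w‖ ≤ 1) (hw1 : w ≠ 1) :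
    Tendsto (fun N : ℕ => (N : ℝ)⁻¹ • ∑ n ∈ range N, a n * w ^ n) atTop (𝓝 0) := by
  have hdev : Tendsto (fun n => (a n - l) * w ^ n) atTop (𝓝 0) := by
    refine squeeze_zero_norm (fun n => ?_) (by simpa using (ha.sub_const l).norm)
    rw [norm_mul, norm_pow]
    exact mul_le_of_le_one_right (norm_nonneg _) (pow_le_one₀ (norm_nonneg w) hw)
  have hsplit : ∀ N : ℕ, (N : ℝ)⁻¹ • ∑ n ∈ range N, a n * w ^ n =
      l * ((N : ℝ)⁻¹ • ∑ n ∈ range N, w ^ n) + (N : ℝ)⁻¹ • ∑ n ∈ range N, (a n - l) * w ^ n := by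
    intro N
    rw [mul_smul_comm, mul_sum, ← smul_add, ← sum_add_distrib]
    congr 1
    exact sum_congr rfl fun n _ => by ring
  simpa [hsplit] using
    ((tendsto_cesaro_pow_of_ne_one hw hw1).const_mul l).add hdev.cesaro_smul

lemma tendsto_cesaro_sum_mul_pow_mul_inv_pow {ι : Type*} [Fintype ι] {z : ι → 𝕜}
    (hz : ∀ j, ‖z j‖ = 1) (hinj : Function.Injective z) (c : ι → 𝕜) (k : ι) :
    Tendsto (fun N : ℕ => (N : ℝ)⁻¹ • ∑ n ∈ range N, (∑ j, c j * z j ^ n) * (z k)⁻¹ ^ n)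
      atTop (𝓝 (c k)) := by
  classical
  have hzk : z k ≠ 0 := norm_ne_zero_iff.mp (by simp [hz k])
  have hratio : ∀ j, z j * (z k)⁻¹ = 1 ↔ j = k := fun j => (mul_inv_eq_one₀ hzk).trans hinj.eq_iff
  have hswap : ∀ N : ℕ, (N : ℝ)⁻¹ • ∑ n ∈ range N, (∑ j, c j * z j ^ n) * (z k)⁻¹ ^ n =
      ∑ j, c j * ((N : ℝ)⁻¹ • ∑ n ∈ range N, (z j * (z k)⁻¹) ^ n) := by
    intro N
    simp only [mul_smul_comm, ← smul_sum, mul_sum, sum_mul]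
    rw [sum_comm]
    exact congrArg _ (sum_congr rfl fun n _ => sum_congr rfl fun j _ => by ring)
  convert (tendsto_finsetSum univ fun j _ =>
    (tendsto_cesaro_pow (w := z j * (z k)⁻¹) (by simp [hz])).const_mul (c j)).congr
      fun N => (hswap N).symm using 2
  simp [hratio]

end Cesaro

theorem limit_forces_zero_iff (d : ℕ) (z : Fin d → ℂ) (hz : ∀ j, ‖z j‖ = 1) :
    (∀ c : Fin d → ℂ,
        (∃ l : ℂ, Filter.Tendsto (fun n : ℕ => ∑ j, c j * z j ^ n) Filter.atTop (nhds l)) →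
        ∀ j, c j = 0)
    ↔ (∀ j, z j ≠ 1 ∧ ∀ k, k ≠ j → z j ≠ z k) := by
  refine ⟨fun H j => ⟨fun hj => ?_, fun k hkj hjk => ?_⟩, fun H c ⟨l, hl⟩ k => ?_⟩
  · have := H (Pi.single j 1)
      ⟨1, tendsto_const_nhds.congr fun n => by simp [Pi.single_apply, hj]⟩ j
    simp at this
  · have := H (Pi.single j 1 - Pi.single k 1)
      ⟨0, tendsto_const_nhds.congr fun n => by
        simp [sub_mul, sum_sub_distrib, Pi.single_apply, hjk]⟩ j
    simp [hkj.symm] at this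
  · have hinj : Function.Injective z := fun i i' h => by_contra fun hne => (H i').2 i hne h.symm
    have hw : ‖(z k)⁻¹‖ = 1 := by rw [norm_inv, hz k, inv_one]
    exact tendsto_nhds_unique (tendsto_cesaro_sum_mul_pow_mul_inv_pow hz hinj c k)
      (tendsto_cesaro_mul_pow_of_tendsto hl hw.le (inv_ne_one.mpr (H k).1))
end

section
/- Let z_1,…,z_d be complex numbers of modulus 1. Then the following are equivalent: (i) whenever c_1,…,c_d ∈ ℂ are such that lim_{n→∞} Re(c_1 z_1^n + ⋯ + c_d z_d^n) exists, one has c_1 = ⋯ = c_d = 0; (ii) for every j ∈ {1,…,d}, z_j ∉ {−1, 1} and z_j ∉ {z_k, conj(z_k)} for all k ≠ j. -/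
/-!
Since `Re (∑ c_j z_j ^ n) = ½ ∑ (c_j z_j ^ n + conj c_j · conj z_j ^ n)`, the real part is a power
sum over the doubled family `z_1, …, z_d, conj z_1, …, conj z_d`, and condition (ii) says exactly
that this family is injective. For distinct `w_i` of modulus one with `w_i ≠ 1`, a convergent power
sum `∑ a_i w_i ^ n` has all `a_i = 0`: the Cesàro means of `(∑ a_i w_i ^ n) · conj w_k ^ n` tend to
`a_k`, whereas the Cesàro means of (convergent sequence) · `conj w_k ^ n` tend to `0` because
`w_k ≠ 1`. Conversely, a coincidence in the doubled family produces nonzero coefficients whose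
real power sum vanishes identically.
-/

open Filter Finset Topology ComplexConjugate

theorem tendsto_cesaro_pow_nhds_zero {r : ℂ} (hr : ‖r‖ ≤ 1) (h1 : r ≠ 1) :
    Tendsto (fun N : ℕ => (N⁻¹ : ℝ) • ∑ n ∈ range N, r ^ n) atTop (𝓝 0) := by
  refine squeeze_zero_norm (fun N => ?_) (tendsto_const_div_atTop_nhds_zero_nat (2 / ‖r - 1‖))
  have hpow : ‖r ^ N - 1‖ ≤ 2 := by
    calc ‖r ^ N - 1‖ ≤ ‖r‖ ^ N + ‖(1 : ℂ)‖ := by simpa [norm_pow] using norm_sub_le (r ^ N) 1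
      _ ≤ 1 + 1 := by gcongr; exacts [pow_le_one₀ (norm_nonneg r) hr, norm_one.le]
      _ = 2 := one_add_one_eq_two
  calc ‖(N⁻¹ : ℝ) • ∑ n ∈ range N, r ^ n‖ = (N : ℝ)⁻¹ * (‖r ^ N - 1‖ / ‖r - 1‖) := by
        rw [geom_sum_eq h1, norm_smul, norm_div, norm_inv, Real.norm_natCast]
    _ ≤ (N : ℝ)⁻¹ * (2 / ‖r - 1‖) := by gcongr
    _ = 2 / ‖r - 1‖ / N := by ring

theorem tendsto_cesaro_mul_pow_nhds_zero {s : ℕ → ℂ} {L : ℂ} (hs : Tendsto s atTop (𝓝 L))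
    {r : ℂ} (hr : ‖r‖ ≤ 1) (h1 : r ≠ 1) :
    Tendsto (fun N : ℕ => (N⁻¹ : ℝ) • ∑ n ∈ range N, s n * r ^ n) atTop (𝓝 0) := by
  have hdev : Tendsto (fun n => (s n - L) * r ^ n) atTop (𝓝 0) := by
    refine squeeze_zero_norm (fun n => ?_) (tendsto_iff_norm_sub_tendsto_zero.1 hs)
    rw [norm_mul, norm_pow]
    exact mul_le_of_le_one_right (norm_nonneg _) (pow_le_one₀ (norm_nonneg r) hr)
  have hsplit : ∀ N : ℕ, (N⁻¹ : ℝ) • ∑ n ∈ range N, s n * r ^ n =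
      (N⁻¹ : ℝ) • ∑ n ∈ range N, (s n - L) * r ^ n + L * ((N⁻¹ : ℝ) • ∑ n ∈ range N, r ^ n) := by
    intro N
    rw [mul_smul_comm, mul_sum, ← smul_add, ← sum_add_distrib]
    exact congrArg _ (sum_congr rfl fun n _ => by ring)
  simpa [hsplit] using hdev.cesaro_smul.add ((tendsto_cesaro_pow_nhds_zero hr h1).const_mul L)

theorem tendsto_cesaro_sum_mul_pow_mul_conj_pow {ι : Type*} [Fintype ι] {w : ι → ℂ}
    (hw : ∀ i, ‖w i‖ = 1) (hinj : Function.Injective w) (a : ι → ℂ) (k : ι) :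
    Tendsto (fun N : ℕ => (N⁻¹ : ℝ) • ∑ n ∈ range N, (∑ i, a i * w i ^ n) * conj (w k) ^ n)
      atTop (𝓝 (a k)) := by
  classical
  have hunit : ∀ i, w i * conj (w i) = 1 := fun i => by
    rw [Complex.mul_conj, Complex.normSq_eq_norm_sq, hw i]; norm_num
  have hlim : ∀ i, Tendsto (fun N : ℕ => (N⁻¹ : ℝ) • ∑ n ∈ range N, (w i * conj (w k)) ^ n)
      atTop (𝓝 (if i = k then 1 else 0)) := by
    intro i
    split_ifs with hik
    · subst hik
      simpa [hunit] using (tendsto_const_nhds (x := (1 : ℂ))).cesaro_smul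
    · refine tendsto_cesaro_pow_nhds_zero (by simp [hw]) fun h => hik (hinj ?_)
      calc w i = w i * conj (w k) * w k := by rw [mul_assoc, mul_comm (conj _), hunit, mul_one]
        _ = w k := by rw [h, one_mul]
  have hexpand : ∀ N : ℕ, (N⁻¹ : ℝ) • ∑ n ∈ range N, (∑ i, a i * w i ^ n) * conj (w k) ^ n =
      ∑ i, a i * ((N⁻¹ : ℝ) • ∑ n ∈ range N, (w i * conj (w k)) ^ n) := by
    intro N
    simp only [sum_mul, mul_pow, smul_sum, mul_smul_comm, mul_sum]
    rw [sum_comm]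
    exact sum_congr rfl fun i _ => sum_congr rfl fun n _ => by rw [mul_assoc]
  simpa [hexpand] using tendsto_finsetSum univ fun i _ => (hlim i).const_mul (a i)

theorem eq_zero_of_tendsto_sum_mul_pow {ι : Type*} [Fintype ι] {w : ι → ℂ}
    (hw : ∀ i, ‖w i‖ = 1) (hinj : Function.Injective w) (h1 : ∀ i, w i ≠ 1) {a : ι → ℂ} {L : ℂ}
    (h : Tendsto (fun n : ℕ => ∑ i, a i * w i ^ n) atTop (𝓝 L)) : a = 0 := by
  funext k
  have hk : ‖conj (w k)‖ ≤ 1 := by simp [hw]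
  have hk1 : conj (w k) ≠ 1 := by simpa [map_eq_one_iff _ (RingHom.injective _)] using h1 k
  exact tendsto_nhds_unique (tendsto_cesaro_sum_mul_pow_mul_conj_pow hw hinj a k)
    (tendsto_cesaro_mul_pow_nhds_zero h hk hk1)

theorem eq_zero_of_tendsto_re_sum_mul_pow {ι : Type*} [Fintype ι] {z : ι → ℂ}
    (hz : ∀ j, ‖z j‖ = 1) (hinj : Function.Injective (Sum.elim z (conj ∘ z)))
    {c : ι → ℂ} {l : ℝ} (h : Tendsto (fun n : ℕ => (∑ j, c j * z j ^ n).re) atTop (𝓝 l)) :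
    c = 0 := by
  have hz1 : ∀ j, z j ≠ 1 := fun j hj =>
    Sum.inl_ne_inr (hinj (a₁ := .inl j) (a₂ := .inr j) (by simp [hj]))
  have h1 : ∀ p, Sum.elim z (conj ∘ z) p ≠ 1 := by
    rintro (j | j) <;> simpa [map_eq_one_iff _ (RingHom.injective _)] using hz1 j
  have hsum : ∀ n : ℕ, ∑ p, Sum.elim c (conj ∘ c) p * Sum.elim z (conj ∘ z) p ^ n =
      ((2 * (∑ j, c j * z j ^ n).re : ℝ) : ℂ) := by
    intro n
    simp [Fintype.sum_sum_type, ← map_pow, ← map_mul, ← map_sum, Complex.add_conj]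
  have hlim : Tendsto (fun n : ℕ => ∑ p, Sum.elim c (conj ∘ c) p * Sum.elim z (conj ∘ z) p ^ n)
      atTop (𝓝 ((2 * l : ℝ) : ℂ)) := by
    rw [funext hsum]
    exact (Complex.continuous_ofReal.tendsto _).comp (h.const_mul 2)
  funext j
  exact congrFun (eq_zero_of_tendsto_sum_mul_pow (by simp [hz]) hinj h1 hlim) (.inl j)

theorem injective_sumElim_conj_of_forall_re_eq_zero {ι : Type*} [Fintype ι] {z : ι → ℂ}
    (H : ∀ c : ι → ℂ, (∀ n : ℕ, (∑ j, c j * z j ^ n).re = 0) → c = 0) :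
    Function.Injective (Sum.elim z (conj ∘ z)) := by
  classical
  have hsum : ∀ (j k : ι) (a b : ℂ) (n : ℕ),
      ∑ i, (Pi.single j a + Pi.single k b : ι → ℂ) i * z i ^ n = a * z j ^ n + b * z k ^ n := by
    intros; simp [add_mul, sum_add_distrib, Pi.single_apply]
  have hinj : Function.Injective z := by
    intro j k hjk
    by_contra hne
    have := congrFun (H (Pi.single j 1 + Pi.single k (-1)) fun n => by
      rw [hsum, hjk]; simp) j
    simp [Ne.symm hne] at this
  refine hinj.sumElim ((RingHom.injective _).comp hinj) fun j k hjk => ?_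
  have := congrArg (∑ i, · i) (H (Pi.single j Complex.I + Pi.single k Complex.I) fun n => by
    rw [hsum, hjk, Function.comp_apply, ← map_pow (starRingEnd ℂ)]
    simp [Complex.mul_re, -map_pow])
  simp [sum_add_distrib] at this

theorem conj_eq_self_iff_of_norm_eq_one {u : ℂ} (hu : ‖u‖ = 1) : conj u = u ↔ u = 1 ∨ u = -1 := by
  refine ⟨fun h => ?_, by rintro (rfl | rfl) <;> simp⟩
  obtain ⟨r, rfl⟩ := Complex.conj_eq_iff_real.1 h
  rw [Complex.norm_real, Real.norm_eq_abs, abs_eq zero_le_one] at hu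
  rcases hu with rfl | rfl <;> simp

theorem injective_sumElim_conj_iff {ι : Type*} {z : ι → ℂ} (hz : ∀ j, ‖z j‖ = 1) :
    Function.Injective (Sum.elim z (conj ∘ z)) ↔
      ∀ j, z j ≠ -1 ∧ z j ≠ 1 ∧ ∀ k, k ≠ j → z j ≠ z k ∧ z j ≠ conj (z k) := by
  simp only [Sum.elim_injective, (RingHom.injective _).of_comp_iff, Function.comp_apply]
  constructor
  · rintro ⟨hinj, -, hconj⟩ j
    have hreal : ¬(z j = 1 ∨ z j = -1) := fun h =>
      hconj j j ((conj_eq_self_iff_of_norm_eq_one (hz j)).2 h).symm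
    exact ⟨fun h => hreal (.inr h), fun h => hreal (.inl h), fun k hk =>
      ⟨hinj.ne hk.symm, hconj j k⟩⟩
  · intro H
    have hinj : Function.Injective z := fun j k hjk =>
      by_contra fun hne => ((H j).2.2 k (Ne.symm hne)).1 hjk
    refine ⟨hinj, hinj, fun j k => ?_⟩
    obtain rfl | hk := eq_or_ne k j
    · exact fun h => not_or.2 ⟨(H k).2.1, (H k).1⟩
        ((conj_eq_self_iff_of_norm_eq_one (hz k)).1 h.symm)
    · exact ((H j).2.2 k hk).2

theorem re_limit_forces_zero_iff (d : ℕ) (z : Fin d → ℂ) (hz : ∀ j, ‖z j‖ = 1) :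
    (∀ c : Fin d → ℂ,
        (∃ l : ℝ, Filter.Tendsto (fun n : ℕ => (∑ j, c j * z j ^ n).re) Filter.atTop (nhds l)) →
        ∀ j, c j = 0)
    ↔ (∀ j, z j ≠ -1 ∧ z j ≠ 1 ∧ ∀ k, k ≠ j → z j ≠ z k ∧ z j ≠ (starRingEnd ℂ) (z k)) := by
  rw [← injective_sumElim_conj_iff hz]
  refine ⟨fun H => injective_sumElim_conj_of_forall_re_eq_zero fun c hc => funext <|
      H c ⟨0, by simpa only [hc] using tendsto_const_nhds⟩,
    fun hinj c ⟨l, hl⟩ => congrFun (eq_zero_of_tendsto_re_sum_mul_pow hz hinj hl)⟩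
end

section
/- Let 0 = t_0 < t_1 < ⋯ < t_d < t_{d+1} = π be real numbers and c_0, c_1, …, c_{d+1} ∈ ℂ. If lim_{n→∞} Re(c_0 e^{i n t_0} + c_1 e^{i n t_1} + ⋯ + c_{d+1} e^{i n t_{d+1}}) = 0, then Re c_0 = Re c_{d+1} = 0 and c_1 = ⋯ = c_d = 0. -/
/-!
Write `s n = ∑ j, c j * z j ^ n` with `z j = exp (i t_j)`, so that `2 Re s n = s n + conj (s n)` is
an exponential sum with frequencies `z j` and `conj (z j)`. Multiplying it by `w⁻¹ ^ n` for a unit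
`w` and taking Cesàro means kills every frequency other than `w`, so the coefficients of the
frequency `w` add up to zero. For `0 < t_j < π` the frequency `z j` occurs exactly once, giving
`c j = 0`; the only coincidences are `z 0 = conj (z 0) = 1` and `z (d + 1) = conj (z (d + 1)) = -1`,
which give `c j + conj (c j) = 2 Re c j = 0`.
-/

open Filter Finset Complex Topology ComplexConjugate

noncomputable def cesaroMean {E : Type*} [AddCommGroup E] [Module ℝ E] (u : ℕ → E) (N : ℕ) : E :=
  (N : ℝ)⁻¹ • ∑ n ∈ range N, u n

theorem Filter.Tendsto.cesaroMean {E : Type*} [NormedAddCommGroup E] [NormedSpace ℝ E]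
    {u : ℕ → E} {l : E} (h : Tendsto u atTop (𝓝 l)) : Tendsto (cesaroMean u) atTop (𝓝 l) :=
  h.cesaro_smul

theorem cesaroMean_add {E : Type*} [AddCommGroup E] [Module ℝ E] (u v : ℕ → E) (N : ℕ) :
    cesaroMean (u + v) N = cesaroMean u N + cesaroMean v N := by
  simp only [cesaroMean, Pi.add_apply, sum_add_distrib, smul_add]

theorem cesaroMean_sum_mul {ι : Type*} (s : Finset ι) (a : ι → ℂ) (f : ι → ℕ → ℂ) (N : ℕ) :
    cesaroMean (fun n => ∑ i ∈ s, a i * f i n) N = ∑ i ∈ s, a i * cesaroMean (f i) N := by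
  simp only [cesaroMean, mul_sum, smul_sum, mul_smul_comm]
  exact sum_comm

theorem tendsto_cesaroMean_pow_of_ne_one {z : ℂ} (hz : ‖z‖ ≤ 1) (h1 : z ≠ 1) :
    Tendsto (cesaroMean (z ^ ·)) atTop (𝓝 0) := by
  refine squeeze_zero_norm (fun N => ?_)
    ((tendsto_inv_atTop_nhds_zero_nat (𝕜 := ℝ)).mul_const (2 / ‖z - 1‖) |>.trans (by simp))
  have hpow : ‖z ^ N - 1‖ ≤ 2 := by
    calc ‖z ^ N - 1‖ ≤ ‖z‖ ^ N + ‖(1 : ℂ)‖ := (norm_sub_le _ _).trans_eq (by rw [norm_pow])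
      _ ≤ 1 + 1 := by gcongr; exacts [pow_le_one₀ (norm_nonneg z) hz, norm_one.le]
      _ = 2 := by norm_num
  rw [cesaroMean, geom_sum_eq h1, norm_smul, norm_div, Real.norm_eq_abs, abs_inv, Nat.abs_cast]
  gcongr

theorem tendsto_cesaroMean_pow {z : ℂ} (hz : ‖z‖ ≤ 1) :
    Tendsto (cesaroMean (z ^ ·)) atTop (𝓝 (if z = 1 then 1 else 0)) := by
  split_ifs with h1
  · simpa [h1] using (tendsto_const_nhds (x := (1 : ℂ))).cesaroMean
  · exact tendsto_cesaroMean_pow_of_ne_one hz h1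

theorem tendsto_cesaroMean_sum_mul_pow_mul_inv_pow {ι : Type*} [Fintype ι] (a e : ι → ℂ)
    (he : ∀ i, ‖e i‖ = 1) {w : ℂ} (hw : ‖w‖ = 1) :
    Tendsto (cesaroMean fun n => (∑ i, a i * e i ^ n) * w⁻¹ ^ n) atTop
      (𝓝 (∑ i ∈ univ.filter (e · = w), a i)) := by
  have hw0 : w ≠ 0 := norm_ne_zero_iff.1 (by simp [hw])
  have hsum : (fun n => (∑ i, a i * e i ^ n) * w⁻¹ ^ n) = fun n => ∑ i, a i * (e i * w⁻¹) ^ n := by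
    ext n
    simp only [sum_mul, mul_pow, mul_assoc]
  have hterm (i : ι) := (tendsto_cesaroMean_pow (z := e i * w⁻¹) (by simp [he, hw])).const_mul (a i)
  rw [hsum, sum_filter]
  refine (tendsto_finsetSum univ fun i _ => hterm i).congr' (Eventually.of_forall fun N => ?_)
    |>.trans (by simp [mul_inv_eq_one₀ hw0])
  exact (cesaroMean_sum_mul univ a (fun i n => (e i * w⁻¹) ^ n) N).symm

theorem sum_filter_add_sum_filter_conj_eq_zero {ι : Type*} [Fintype ι] (c e : ι → ℂ)
    (he : ∀ i, ‖e i‖ = 1) (h : Tendsto (fun n : ℕ => (∑ i, c i * e i ^ n).re) atTop (𝓝 0))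
    {w : ℂ} (hw : ‖w‖ = 1) :
    ∑ i ∈ univ.filter (e · = w), c i + ∑ i ∈ univ.filter (fun i => conj (e i) = w), conj (c i)
      = 0 := by
  have hre (n : ℕ) : ((2 * (∑ i, c i * e i ^ n).re : ℝ) : ℂ)
      = (∑ i, c i * e i ^ n) + ∑ i, conj (c i) * conj (e i) ^ n := by
    rw [← add_conj]
    simp only [map_sum, map_mul, map_pow]
  have hlim := (tendsto_cesaroMean_sum_mul_pow_mul_inv_pow c e he hw).add
    (tendsto_cesaroMean_sum_mul_pow_mul_inv_pow (conj ∘ c) (conj ∘ e) (by simp [he]) hw)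
  have hzero : Tendsto (fun n : ℕ => ((2 * (∑ i, c i * e i ^ n).re : ℝ) : ℂ) * w⁻¹ ^ n) atTop
      (𝓝 0) := by
    have h2 : Tendsto (fun n : ℕ => 2 * (∑ i, c i * e i ^ n).re) atTop (𝓝 0) := by
      simpa using h.const_mul 2
    refine squeeze_zero_norm (fun n => le_of_eq ?_) ((continuous_norm.tendsto 0).comp h2
      |>.trans (by simp))
    simp only [norm_mul, norm_pow, norm_inv, hw, inv_one, one_pow, mul_one, norm_real,
      Function.comp_apply]
  refine tendsto_nhds_unique (hlim.congr fun N => ?_) hzero.cesaroMean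
  simp only [Function.comp_apply, ← cesaroMean_add]
  congr 1
  ext n
  simp only [Pi.add_apply, hre, add_mul]

theorem exp_ofReal_mul_I_injOn : Set.InjOn (fun x : ℝ => exp (x * I)) (Set.Icc 0 Real.pi) :=
  fun x hx y hy hxy => Real.injOn_cos hx hy (by simpa [exp_ofReal_mul_I_re] using congrArg re hxy)

theorem sin_eq_zero_of_conj_exp_ofReal_mul_I_eq {x y : ℝ} (hx : x ∈ Set.Icc 0 Real.pi)
    (hy : y ∈ Set.Icc 0 Real.pi) (h : conj (exp (x * I)) = exp (y * I)) : Real.sin y = 0 := by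
  have hre := congrArg re h
  have him := congrArg im h
  simp only [conj_re, conj_im, exp_ofReal_mul_I_re, exp_ofReal_mul_I_im] at hre him
  rw [Real.injOn_cos hx hy hre] at him
  linarith

theorem re_trig_limit_zero (d : ℕ) (t : Fin (d + 2) → ℝ) (ht0 : t 0 = 0)
    (htlast : t (Fin.last (d + 1)) = Real.pi) (hmono : StrictMono t) (c : Fin (d + 2) → ℂ)
    (h : Filter.Tendsto
        (fun n : ℕ => (∑ j, c j * Complex.exp (Complex.I * (n : ℂ) * (t j : ℂ))).re)
        Filter.atTop (nhds 0)) :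
    (c 0).re = 0 ∧ (c (Fin.last (d + 1))).re = 0 ∧
      ∀ j : Fin (d + 2), j ≠ 0 → j ≠ Fin.last (d + 1) → c j = 0 := by
  set e : Fin (d + 2) → ℂ := fun j => exp (t j * I)
  have ht_mem (j : Fin (d + 2)) : t j ∈ Set.Icc 0 Real.pi :=
    ⟨ht0 ▸ hmono.monotone (Fin.zero_le j), htlast ▸ hmono.monotone (Fin.le_last j)⟩
  have he (j : Fin (d + 2)) : ‖e j‖ = 1 := norm_exp_ofReal_mul_I _
  have hfiber (k : Fin (d + 2)) : univ.filter (e · = e k) = {k} := by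
    ext j
    simp [e, (exp_ofReal_mul_I_injOn.eq_iff (ht_mem j) (ht_mem k)).trans hmono.injective.eq_iff]
  have hkey (k : Fin (d + 2)) := sum_filter_add_sum_filter_conj_eq_zero c e he
    (h.congr fun n => by simp only [e, ← exp_nat_mul]; ring_nf) (he k)
  have hreal (k : Fin (d + 2)) (hk : conj (e k) = e k) : (c k).re = 0 := by
    have hconj : univ.filter (fun j => conj (e j) = e k) = {k} := by
      rw [← hk, ← hfiber k]
      simp only [(starRingEnd ℂ).injective.eq_iff]
    simpa [hfiber k, hconj, add_conj] using hkey k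
  refine ⟨hreal 0 (by simp [e, ht0]), hreal _ (by simp [e, htlast, exp_pi_mul_I]),
    fun k hk0 hklast => ?_⟩
  have hsin : 0 < Real.sin (t k) := Real.sin_pos_of_pos_of_lt_pi
    (ht0 ▸ hmono (Fin.pos_of_ne_zero hk0)) (htlast ▸ hmono (Fin.lt_last_iff_ne_last.2 hklast))
  have hempty : univ.filter (fun j => conj (e j) = e k) = ∅ := filter_eq_empty_iff.2 fun j _ hj =>
    hsin.ne' (sin_eq_zero_of_conj_exp_ofReal_mul_I_eq (ht_mem j) (ht_mem k) hj)
  simpa [hfiber k, hempty] using hkey k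
end

section
/- Let A ∈ ℝ^{d×d} have a non-real eigenvalue λ with |λ| = r > 0 and arg λ/(2π) rational and positive. Then there exist x, y ∈ ℝ^d with xᵀ Aⁿ y = rⁿ · sin(n · arg λ) for all n ∈ ℕ; consequently the set { n : xᵀ Aⁿ y = 0 } equals Nℕ for some integer N ≥ 2 and has asymptotic density 1/N ∈ (0,1). -/
open scoped Classical

/-!
If `w` is a complex eigenvector of the real matrix `A` for `μ`, taking imaginary parts in
`Aⁿ w = μⁿ w` gives `Aⁿ (Im w) = Im (μⁿ) • Re w + Re (μⁿ) • Im w`. As `μ` is not real, `Re w` is not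
a multiple of `Im w`, so some `x` satisfies `x ⬝ Re w = 1` and `x ⬝ Im w = 0`; then
`x ⬝ Aⁿ (Im w) = Im (μⁿ) = ‖μ‖ⁿ sin (n arg μ)`. Writing `arg μ = 2πq`, this vanishes exactly when the
denominator `N` of `2q` divides `n`, and `N ≠ 1` because `Im μ ≠ 0`. Among `1, …, M` there are
`⌊M / N⌋` multiples of `N`, whence the density `1 / N`.
-/

open scoped Real

open Complex Filter Finset Matrix Topology

namespace Matrix

variable {m n : Type*} [Fintype n]

lemma re_map_ofReal_mulVec (B : Matrix m n ℝ) (w : n → ℂ) :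
    re ∘ (B.map ofReal *ᵥ w) = B *ᵥ (re ∘ w) := by
  funext i
  simp [mulVec, dotProduct, re_sum]

lemma im_map_ofReal_mulVec (B : Matrix m n ℝ) (w : n → ℂ) :
    im ∘ (B.map ofReal *ᵥ w) = B *ᵥ (im ∘ w) := by
  funext i
  simp [mulVec, dotProduct, im_sum]

variable {B : Matrix n n ℝ} {w : n → ℂ} {μ : ℂ}

lemma mulVec_re_of_map_ofReal_mulVec_eq_smul (h : B.map ofReal *ᵥ w = μ • w) :
    B *ᵥ (re ∘ w) = μ.re • (re ∘ w) - μ.im • (im ∘ w) := by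
  rw [← re_map_ofReal_mulVec, h]
  funext i
  simp

lemma mulVec_im_of_map_ofReal_mulVec_eq_smul (h : B.map ofReal *ᵥ w = μ • w) :
    B *ᵥ (im ∘ w) = μ.im • (re ∘ w) + μ.re • (im ∘ w) := by
  rw [← im_map_ofReal_mulVec, h]
  funext i
  simp [add_comm]

lemma re_notMem_span_im_of_map_ofReal_mulVec_eq_smul (h : B.map ofReal *ᵥ w = μ • w)
    (hw : w ≠ 0) (hμ : μ.im ≠ 0) : re ∘ w ∉ ℝ ∙ (im ∘ w) := by
  intro hmem
  obtain ⟨c, hc⟩ := Submodule.mem_span_singleton.mp hmem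
  have hre := mulVec_re_of_map_ofReal_mulVec_eq_smul h
  have him := mulVec_im_of_map_ofReal_mulVec_eq_smul h
  rw [← hc, mulVec_smul, him, ← hc] at hre
  have : (μ.im * (c ^ 2 + 1)) • (im ∘ w) = 0 := by
    linear_combination (norm := module) hre
  have him0 : im ∘ w = 0 := (smul_eq_zero.mp this).resolve_left (by positivity)
  refine hw (funext fun i => Complex.ext ?_ (congrFun him0 i))
  simpa [him0] using (congrFun hc i).symm

lemma exists_dotProduct_eq_one_and_eq_zero {n K : Type*} [Fintype n] [Field K]
    {u v : n → K} (h : u ∉ K ∙ v) : ∃ x : n → K, x ⬝ᵥ u = 1 ∧ x ⬝ᵥ v = 0 := by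
  obtain ⟨f, hfu, hfv⟩ := Submodule.exists_dual_map_eq_bot_of_notMem h inferInstance
  have hv : f v = 0 := by
    have := Submodule.mem_map_of_mem (f := f) (Submodule.mem_span_singleton_self v)
    rwa [hfv, Submodule.mem_bot] at this
  refine ⟨(f u)⁻¹ • (dotProductEquiv K n).symm f, ?_, ?_⟩ <;>
    simp [← dotProductEquiv_apply_apply, hfu, hv]

end Matrix

lemma Rat.den_dvd_iff_exists_intCast_eq_mul (s : ℚ) (n : ℕ) :
    s.den ∣ n ↔ ∃ k : ℤ, (k : ℚ) = n * s := by
  constructor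
  · rintro ⟨m, rfl⟩
    refine ⟨m * s.num, ?_⟩
    push_cast
    rw [mul_comm (s.den : ℚ), mul_assoc, Rat.den_mul_eq_num]
  · rintro ⟨k, hk⟩
    have hs : (n : ℚ) * s = ((n * s.num : ℤ) : ℚ) / ((s.den : ℤ) : ℚ) := by
      push_cast
      rw [mul_div_assoc, Rat.num_div_den]
    have hdvd : (s.den : ℤ) ∣ n * s.num := by
      rw [← Rat.den_div_intCast_eq_one_iff _ _ (by exact_mod_cast s.den_nz), ← hs, ← hk]
      rfl
    have hcop : IsCoprime (s.den : ℤ) s.num := by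
      rw [Int.isCoprime_iff_gcd_eq_one, Int.gcd_comm]
      exact s.reduced
    exact Int.natCast_dvd_natCast.mp (hcop.dvd_of_dvd_mul_right hdvd)

lemma Real.sin_mul_two_pi_mul_ratCast_eq_zero_iff (q : ℚ) (n : ℕ) :
    Real.sin (n * (2 * π * q)) = 0 ↔ (2 * q).den ∣ n := by
  rw [Real.sin_eq_zero_iff, Rat.den_dvd_iff_exists_intCast_eq_mul]
  refine exists_congr fun k => ?_
  have : (n : ℝ) * (2 * π * q) = ((n * (2 * q) : ℚ) : ℝ) * π := by
    push_cast
    ring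
  rw [this, mul_left_inj' Real.pi_ne_zero]
  exact_mod_cast Iff.rfl

lemma Complex.im_pow (μ : ℂ) (n : ℕ) : (μ ^ n).im = ‖μ‖ ^ n * Real.sin (n * arg μ) := by
  conv_lhs => rw [← norm_mul_exp_arg_mul_I μ, mul_pow, ← exp_nat_mul]
  have : (n : ℂ) * (arg μ * I) = ((n * arg μ : ℝ) : ℂ) * I := by
    push_cast
    ring
  rw [this, ← ofReal_pow, im_ofReal_mul, exp_ofReal_mul_I_im]

lemma Complex.im_pow_eq_zero_iff_den_dvd {μ : ℂ} {q : ℚ} (hμ : μ ≠ 0)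
    (harg : arg μ = 2 * π * q) (n : ℕ) : (μ ^ n).im = 0 ↔ (2 * q).den ∣ n := by
  rw [im_pow, mul_eq_zero, harg, Real.sin_mul_two_pi_mul_ratCast_eq_zero_iff]
  simp [hμ]

lemma tendsto_card_filter_dvd_div (N : ℕ) :
    Tendsto (fun M : ℕ => (#{n ∈ Icc 1 M | N ∣ n} : ℝ) / M) atTop (𝓝 (1 / N)) := by
  have hcard (M : ℕ) : #{n ∈ Icc 1 M | N ∣ n} = ⌊1 / (N : ℝ) * M⌋₊ := by
    rw [one_div_mul_eq_div, Nat.floor_div_eq_div, ← Nat.Ioc_filter_dvd_card_eq_div,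
      ← Icc_add_one_left_eq_Ioc, zero_add]
  simp_rw [hcard]
  exact (tendsto_nat_floor_mul_div_atTop (by positivity)).comp tendsto_natCast_atTop_atTop

theorem exists_zero_set_lattice_of_rational_angle_general (d : ℕ) (A : Matrix (Fin d) (Fin d) ℝ)
    (μ : ℂ) (r : ℝ) (hμim : μ.im ≠ 0) (hμabs : ‖μ‖ = r)
    (hμeig : Module.End.HasEigenvalue (Matrix.toLin' (A.map (Complex.ofReal))) μ)
    (hθ : ∃ q : ℚ, 0 < q ∧ Complex.arg μ = 2 * Real.pi * q) :
    ∃ x y : Fin d → ℝ,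
      (∀ n : ℕ, 1 ≤ n →
        dotProduct x ((A ^ n).mulVec y) = r ^ n * Real.sin (n * Complex.arg μ)) ∧
      ∃ N : ℕ, 2 ≤ N ∧
        ({n : ℕ | 1 ≤ n ∧ dotProduct x ((A ^ n).mulVec y) = 0}
          = {n : ℕ | 1 ≤ n ∧ N ∣ n}) ∧
        Filter.Tendsto
          (fun M : ℕ =>
            (((Finset.Icc 1 M).filter fun n => dotProduct x ((A ^ n).mulVec y) = 0).card : ℝ) / M)
          Filter.atTop (nhds (1 / N)) := by
  obtain ⟨w, hw⟩ := hμeig.exists_hasEigenvector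
  have hpow (n : ℕ) : (A ^ n).map ofReal *ᵥ w = μ ^ n • w := by
    have hmap : (A ^ n).map ofReal = A.map ofReal ^ n := Matrix.map_pow A ofRealHom n
    rw [hmap, ← toLin'_apply, toLin'_pow]
    exact hw.pow_apply n
  obtain ⟨x, hx_re, hx_im⟩ := exists_dotProduct_eq_one_and_eq_zero
    (re_notMem_span_im_of_map_ofReal_mulVec_eq_smul (by simpa using hpow 1) hw.2 hμim)
  have hform (n : ℕ) : x ⬝ᵥ (A ^ n *ᵥ (im ∘ w)) = (μ ^ n).im := by
    rw [mulVec_im_of_map_ofReal_mulVec_eq_smul (hpow n), dotProduct_add, dotProduct_smul,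
      dotProduct_smul, hx_re, hx_im, smul_eq_mul, smul_zero, mul_one, add_zero]
  obtain ⟨q, -, harg⟩ := hθ
  have hzero (n : ℕ) : x ⬝ᵥ (A ^ n *ᵥ (im ∘ w)) = 0 ↔ (2 * q).den ∣ n := by
    rw [hform]
    exact im_pow_eq_zero_iff_den_dvd (fun h => hμim (by simp [h])) harg n
  have hN : 2 ≤ (2 * q).den := by
    refine (Nat.two_le_iff _).2 ⟨(2 * q).den_nz, fun h1 => hμim ?_⟩
    rw [← pow_one μ, ← hform]
    exact (hzero 1).2 (by simp [h1])
  refine ⟨x, im ∘ w, fun n _ => by rw [hform, im_pow, hμabs], (2 * q).den,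
    hN, by simp only [hzero], ?_⟩
  simp_rw [hzero]
  exact tendsto_card_filter_dvd_div _

theorem exists_zero_set_lattice_of_rational_angle (d : ℕ) (A : Matrix (Fin d) (Fin d) ℝ)
    (μ : ℂ) (r : ℝ) (hr : 0 < r) (hμim : μ.im ≠ 0) (hμabs : ‖μ‖ = r)
    (hμeig : Module.End.HasEigenvalue (Matrix.toLin' (A.map (Complex.ofReal))) μ)
    (hθ : ∃ q : ℚ, 0 < q ∧ Complex.arg μ = 2 * Real.pi * q) :
    ∃ x y : Fin d → ℝ,
      (∀ n : ℕ, 1 ≤ n →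
        dotProduct x ((A ^ n).mulVec y) = r ^ n * Real.sin (n * Complex.arg μ)) ∧
      ∃ N : ℕ, 2 ≤ N ∧
        ({n : ℕ | 1 ≤ n ∧ dotProduct x ((A ^ n).mulVec y) = 0}
          = {n : ℕ | 1 ≤ n ∧ N ∣ n}) ∧
        Filter.Tendsto
          (fun M : ℕ =>
            (((Finset.Icc 1 M).filter fun n => dotProduct x ((A ^ n).mulVec y) = 0).card : ℝ) / M)
          Filter.atTop (nhds (1 / N)) :=
  exists_zero_set_lattice_of_rational_angle_general d A μ r hμim hμabs hμeig hθ
end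

section
/- For every p ∈ ℤ and β ∈ ℝ \ {0}, the integral I_{p,β} := ∫₀¹ e^{4πi p t + 2iβ ln|cos(2πt)|} dt satisfies |I_{p,β}|² = β·tanh(πβ)/(π(p² + β²)); in particular I_{p,β} ≠ 0. -/
/-- The integral `I_{p,β}` from the paper. -/
noncomputable def Ipb (p : ℤ) (β : ℝ) : ℂ :=
  ∫ t in (0 : ℝ)..1,
    Complex.exp (4 * Real.pi * Complex.I * (p : ℂ) * (t : ℂ)
      + 2 * Complex.I * (β : ℂ) * (Real.log |Real.cos (2 * Real.pi * t)| : ℂ))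

/-!
Substituting `θ = 2πt` and using `π`-periodicity, `π I_{p,β} = M_p := ∫₀^π e^{2ipθ} w(θ) dθ`
with `w(θ) = |cos θ|^{2iβ}`. Integrating the derivative of `cos θ · w(θ) · e^{i(2p+1)θ}`, which
takes the same value at `0` and `π`, gives the recurrence `(p + 1 + iβ) M_{p+1} = (iβ - p) M_p`,
so `|M_p|² (p² + β²)` does not depend on `p ∈ ℤ`. Finally `M_0 = B(1/2, 1/2 + iβ)` via
`u = sin² θ`, and the reflection formula for `Γ` evaluates `|B(1/2, 1/2 + iβ)|² = π tanh(πβ)/β`.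
-/

open Complex Set MeasureTheory
open scoped Real

namespace Real

theorem injOn_sin_sq_Ioo : InjOn (fun θ => sin θ ^ 2) (Ioo 0 (π / 2)) := by
  intro x hx y hy hxy
  have hsx := sin_pos_of_pos_of_lt_pi hx.1 (by linarith [hx.2, pi_pos])
  have hsy := sin_pos_of_pos_of_lt_pi hy.1 (by linarith [hy.2, pi_pos])
  refine injOn_sin ⟨by linarith [hx.1, pi_pos], hx.2.le⟩ ⟨by linarith [hy.1, pi_pos], hy.2.le⟩ ?_
  exact (pow_left_inj₀ hsx.le hsy.le two_ne_zero).1 hxy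

theorem image_sin_sq_Ioo : (fun θ => sin θ ^ 2) '' Ioo 0 (π / 2) = Ioo 0 1 := by
  ext y
  constructor
  · rintro ⟨x, hx, rfl⟩
    have hs := sin_pos_of_pos_of_lt_pi hx.1 (by linarith [hx.2, pi_pos])
    have hc := cos_pos_of_mem_Ioo ⟨by linarith [hx.1, pi_pos], hx.2⟩
    exact ⟨by positivity, by nlinarith [sin_sq_add_cos_sq x]⟩
  · rintro ⟨hy0, hy1⟩
    have hsqrt_pos : 0 < √y := sqrt_pos.2 hy0
    have hsqrt_lt : √y < 1 := (sqrt_lt' one_pos).2 (by simpa using hy1)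
    refine ⟨arcsin √y, ⟨arcsin_pos.2 hsqrt_pos, arcsin_lt_pi_div_two.2 hsqrt_lt⟩, ?_⟩
    simp only [sin_arcsin (by linarith) hsqrt_lt.le, sq_sqrt hy0.le]

theorem mul_tanh_mul_pos {x c : ℝ} (hx : x ≠ 0) (hc : 0 < c) : 0 < x * tanh (c * x) := by
  rw [tanh_eq_sinh_div_cosh]
  rcases hx.lt_or_gt with hx | hx
  · exact mul_pos_of_neg_of_neg hx
      (div_neg_of_neg_of_pos (sinh_neg_iff.2 (mul_neg_of_pos_of_neg hc hx)) (cosh_pos _))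
  · exact mul_pos hx (div_pos (sinh_pos_iff.2 (mul_pos hc hx)) (cosh_pos _))

end Real

namespace Complex

theorem ofReal_sq_cpow_sub_one_mul {x : ℝ} (hx : 0 < x) (s : ℂ) :
    ((x ^ 2 : ℝ) : ℂ) ^ (s - 1) * x = (x : ℂ) ^ (2 * s - 1) := by
  have hx2 : ((x ^ 2 : ℝ) : ℂ) ≠ 0 := ofReal_ne_zero.2 (by positivity)
  rw [cpow_def_of_ne_zero hx2, cpow_def_of_ne_zero (ofReal_ne_zero.2 hx.ne'),
    ← ofReal_log (sq_nonneg x), Real.log_pow, ← ofReal_log hx.le]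
  conv_lhs => rw [← exp_log (ofReal_ne_zero.2 hx.ne'), ← ofReal_log hx.le, ← exp_add]
  push_cast
  ring_nf

theorem betaIntegral_eq_two_mul_integral_sin_cpow_mul_cos_cpow (u v : ℂ) :
    betaIntegral u v = 2 * ∫ θ in (0 : ℝ)..π / 2,
      (Real.sin θ : ℂ) ^ (2 * u - 1) * (Real.cos θ : ℂ) ^ (2 * v - 1) := by
  have hderiv : ∀ θ ∈ Ioo (0 : ℝ) (π / 2), HasDerivWithinAt (fun θ : ℝ => Real.sin θ ^ 2)
      (2 * Real.sin θ * Real.cos θ) (Ioo 0 (π / 2)) θ := fun θ _ =>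
    (((Real.hasDerivAt_sin θ).fun_pow 2).congr_deriv (by ring)).hasDerivWithinAt
  rw [betaIntegral, intervalIntegral.integral_of_le zero_le_one, integral_Ioc_eq_integral_Ioo,
    ← Real.image_sin_sq_Ioo, integral_image_eq_integral_abs_deriv_smul measurableSet_Ioo hderiv
      Real.injOn_sin_sq_Ioo, intervalIntegral.integral_of_le (by positivity : (0 : ℝ) ≤ π / 2),
    integral_Ioc_eq_integral_Ioo, ← integral_const_mul]
  refine setIntegral_congr_fun measurableSet_Ioo fun θ hθ => ?_
  have hsin := Real.sin_pos_of_pos_of_lt_pi hθ.1 (by linarith [hθ.2, Real.pi_pos])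
  have hcos := Real.cos_pos_of_mem_Ioo ⟨by linarith [hθ.1, Real.pi_pos], hθ.2⟩
  have hcos_sq : (1 : ℂ) - ((Real.sin θ ^ 2 : ℝ) : ℂ) = ((Real.cos θ ^ 2 : ℝ) : ℂ) := by
    rw [Real.cos_sq']; push_cast; ring
  rw [hcos_sq, abs_of_pos (by positivity), real_smul, ← ofReal_sq_cpow_sub_one_mul hsin,
    ← ofReal_sq_cpow_sub_one_mul hcos]
  push_cast
  ring

theorem Gamma_one_half_add_mul_I_mul_Gamma_one_half_sub_mul_I (t : ℝ) :
    Gamma (1 / 2 + t * I) * Gamma (1 / 2 - t * I) = π / cosh (π * t) := by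
  have h := Gamma_mul_Gamma_one_sub (1 / 2 + t * I)
  rw [show (1 : ℂ) - (1 / 2 + t * I) = 1 / 2 - t * I by ring,
    show (π : ℂ) * (1 / 2 + t * I) = π / 2 + (π * t : ℂ) * I by ring,
    sin_add, sin_pi_div_two, cos_pi_div_two, cos_mul_I, sin_mul_I] at h
  simpa using h

theorem Gamma_one_add_mul_I_mul_Gamma_one_sub_mul_I {t : ℝ} (ht : t ≠ 0) :
    Gamma (1 + t * I) * Gamma (1 - t * I) = π * t / sinh (π * t) := by
  have htI : (t : ℂ) * I ≠ 0 := mul_ne_zero (ofReal_ne_zero.2 ht) I_ne_zero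
  have h := Gamma_mul_Gamma_one_sub (t * I)
  rw [show (π : ℂ) * (t * I) = (π * t : ℂ) * I by ring, sin_mul_I] at h
  rw [add_comm, Gamma_add_one _ htI, mul_assoc, h]
  field_simp

open ComplexConjugate in
theorem normSq_betaIntegral_one_half {t : ℝ} (ht : t ≠ 0) :
    normSq (betaIntegral (1 / 2) (1 / 2 + t * I)) = π * Real.tanh (π * t) / t := by
  set B := betaIntegral (1 / 2) (1 / 2 + t * I)
  have hB : Gamma (1 / 2) * Gamma (1 / 2 + t * I) = Gamma (1 + t * I) * B := by
    rw [Gamma_mul_Gamma_eq_betaIntegral (by norm_num) (by simp),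
      show (1 / 2 + (1 / 2 + t * I) : ℂ) = 1 + t * I by ring]
  have hB_conj : Gamma (1 / 2) * Gamma (1 / 2 - t * I) = Gamma (1 - t * I) * conj B := by
    have h := congrArg conj hB
    simp only [map_mul, ← Gamma_conj, map_div₀, map_one, map_ofNat, map_add, conj_ofReal,
      conj_I] at h
    simpa [sub_eq_add_neg] using h
  have hhalf : Gamma (1 / 2) * Gamma (1 / 2) = π := by
    rw [Gamma_one_half_eq, ← cpow_add _ _ (ofReal_ne_zero.2 Real.pi_ne_zero)]
    norm_num
  have hprod : (π : ℂ) * (π / cosh (π * t)) = π * t / sinh (π * t) * normSq B := by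
    rw [← Gamma_one_half_add_mul_I_mul_Gamma_one_half_sub_mul_I,
      ← Gamma_one_add_mul_I_mul_Gamma_one_sub_mul_I ht, ← mul_conj, ← hhalf]
    linear_combination
      Gamma (1 / 2) * Gamma (1 / 2 - t * I) * hB + Gamma (1 + t * I) * B * hB_conj
  have hprod_real : π * (π / Real.cosh (π * t)) = π * t / Real.sinh (π * t) * normSq B := by
    exact_mod_cast hprod
  have hsinh : Real.sinh (π * t) ≠ 0 := by simp [Real.sinh_eq_zero, Real.pi_ne_zero, ht]
  have hcosh : Real.cosh (π * t) ≠ 0 := (Real.cosh_pos _).ne'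
  rw [Real.tanh_eq_sinh_div_cosh]
  field_simp at hprod_real ⊢
  linear_combination -hprod_real

end Complex

/-- `|cos θ| ^ (2iβ)`, with the value `1` at the zeros of `cos`. -/
noncomputable def cosPhase (β θ : ℝ) : ℂ := exp (2 * I * β * Real.log |Real.cos θ|)

section cosPhase

variable (β : ℝ)

theorem norm_cosPhase (θ : ℝ) : ‖cosPhase β θ‖ = 1 := by
  simp [cosPhase, norm_exp]

theorem measurable_cosPhase : Measurable (cosPhase β) := by
  unfold cosPhase; fun_prop

theorem intervalIntegrable_mul_cosPhase {ψ : ℝ → ℂ} (hψ : Continuous ψ) (a b : ℝ) :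
    IntervalIntegrable (fun θ => ψ θ * cosPhase β θ) volume a b := by
  have hbdd : ∀ᵐ θ ∂volume, ‖cosPhase β θ‖ ≤ 1 := ae_of_all _ fun θ => (norm_cosPhase β θ).le
  have hmeas {μ : Measure ℝ} : AEStronglyMeasurable (cosPhase β) μ :=
    (measurable_cosPhase β).aestronglyMeasurable
  exact ⟨(hψ.intervalIntegrable a b).1.mul_bdd hmeas (ae_restrict_of_ae hbdd),
    (hψ.intervalIntegrable a b).2.mul_bdd hmeas (ae_restrict_of_ae hbdd)⟩

theorem cosPhase_add_pi (θ : ℝ) : cosPhase β (θ + π) = cosPhase β θ := by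
  simp [cosPhase, Real.cos_add_pi]

theorem cosPhase_pi_sub (θ : ℝ) : cosPhase β (π - θ) = cosPhase β θ := by
  simp [cosPhase, Real.cos_pi_sub]

theorem cosPhase_eq_cpow {θ : ℝ} (hθ : 0 < Real.cos θ) :
    cosPhase β θ = (Real.cos θ : ℂ) ^ (2 * β * I) := by
  rw [cosPhase, cpow_def_of_ne_zero (ofReal_ne_zero.2 hθ.ne'), ← ofReal_log hθ.le,
    abs_of_pos hθ]
  ring_nf

theorem continuous_cos_mul_cosPhase :
    Continuous fun θ => (Real.cos θ : ℂ) * cosPhase β θ := by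
  refine continuous_iff_continuousAt.2 fun θ => ?_
  by_cases hθ : Real.cos θ = 0
  · have hnorm : (fun x => ‖(Real.cos x : ℂ) * cosPhase β x‖) = fun x => |Real.cos x| := by
      ext x; rw [norm_mul, norm_cosPhase, mul_one, norm_real, Real.norm_eq_abs]
    rw [ContinuousAt, hθ, ofReal_zero, zero_mul, tendsto_zero_iff_norm_tendsto_zero, hnorm]
    simpa [hθ] using Real.continuous_cos.abs.tendsto θ
  · have : ContinuousAt (fun x => Real.log |Real.cos x|) θ :=
      Real.continuous_cos.abs.continuousAt.log (abs_ne_zero.2 hθ)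
    unfold cosPhase
    fun_prop

theorem hasDerivAt_cos_mul_cosPhase {θ : ℝ} (hθ : Real.cos θ ≠ 0) :
    HasDerivAt (fun x => (Real.cos x : ℂ) * cosPhase β x)
      (-(1 + 2 * β * I) * Real.sin θ * cosPhase β θ) θ := by
  have hlog : HasDerivAt (fun x => Real.log |Real.cos x|) (-Real.sin θ / Real.cos θ) θ := by
    simpa only [Real.log_abs] using (Real.hasDerivAt_cos θ).log hθ
  have hphase : HasDerivAt (cosPhase β)
      (cosPhase β θ * (2 * I * β * ((-Real.sin θ / Real.cos θ : ℝ) : ℂ))) θ :=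
    (hlog.ofReal_comp.const_mul (2 * I * β)).cexp
  refine ((Real.hasDerivAt_cos θ).ofReal_comp.mul hphase).congr_deriv ?_
  push_cast
  have : Complex.cos θ ≠ 0 := by exact_mod_cast hθ
  field_simp
  ring

end cosPhase

noncomputable def cosPhaseMoment (β : ℝ) (p : ℤ) : ℂ :=
  ∫ θ in (0 : ℝ)..π, exp (2 * p * θ * I) * cosPhase β θ

section cosPhaseMoment

variable (β : ℝ)

theorem intervalIntegrable_exp_mul_cosPhase (p : ℤ) (a b : ℝ) :
    IntervalIntegrable (fun θ : ℝ => exp (2 * p * θ * I) * cosPhase β θ) volume a b :=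
  intervalIntegrable_mul_cosPhase β (by fun_prop) a b

theorem exp_mul_cosPhase_periodic (p : ℤ) :
    Function.Periodic (fun θ : ℝ => exp (2 * p * θ * I) * cosPhase β θ) π := by
  intro θ
  simp only [cosPhase_add_pi]
  rw [show (2 * p * ((θ + π : ℝ) : ℂ) * I) = 2 * p * θ * I + p * (2 * π * I) by push_cast; ring,
    exp_add, exp_int_mul_two_pi_mul_I, mul_one]

theorem hasDerivAt_cos_mul_cosPhase_mul_exp (p : ℤ) {x : ℝ} (hx : Real.cos x ≠ 0) :
    HasDerivAt (fun x : ℝ => (Real.cos x : ℂ) * cosPhase β x * exp ((2 * p + 1) * x * I))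
      (I * (((p + 1 : ℂ) + β * I) * (exp (2 * ((p + 1 : ℤ) : ℂ) * x * I) * cosPhase β x)
        - (β * I - p) * (exp (2 * p * x * I) * cosPhase β x))) x := by
  have hE : HasDerivAt (fun x : ℝ => exp ((2 * p + 1) * x * I))
      (exp ((2 * p + 1) * x * I) * ((2 * p + 1) * I)) x := by
    simpa using
      (((hasDerivAt_id (x : ℂ)).const_mul (2 * p + 1 : ℂ)).mul_const I).cexp.comp_ofReal
  refine ((hasDerivAt_cos_mul_cosPhase β hx).mul hE).congr_deriv ?_
  set E := exp ((2 * p + 1) * x * I)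
  have hsucc : exp (2 * ((p + 1 : ℤ) : ℂ) * x * I) = E * (cos x + sin x * I) := by
    rw [← exp_mul_I, ← exp_add]; push_cast; ring_nf
  have hself : exp (2 * (p : ℂ) * x * I) = E * (cos x - sin x * I) := by
    have hneg : exp (-(x : ℂ) * I) = cos x - sin x * I := by
      rw [exp_mul_I, cos_neg, sin_neg]; ring
    rw [← hneg, ← exp_add]; ring_nf
  rw [hsucc, hself]
  push_cast
  linear_combination -(E * cosPhase β x * sin x * (1 + 2 * β * I)) * I_sq

theorem cosPhaseMoment_recurrence (p : ℤ) :
    ((p + 1 : ℂ) + β * I) * cosPhaseMoment β (p + 1) = (β * I - p) * cosPhaseMoment β p := by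
  set G : ℝ → ℂ := fun x => (Real.cos x : ℂ) * cosPhase β x * exp ((2 * p + 1) * x * I)
  have hcount : {x : ℝ | Real.cos x = 0}.Countable := by
    refine (countable_range fun k : ℤ => (2 * k + 1) * π / 2).mono fun x hx => ?_
    obtain ⟨k, hk⟩ := Real.cos_eq_zero_iff.1 hx
    exact ⟨k, hk.symm⟩
  have hGcont : Continuous G := (continuous_cos_mul_cosPhase β).mul (by fun_prop)
  have hint := fun q => intervalIntegrable_exp_mul_cosPhase β q 0 π
  have hFTC := integral_eq_of_hasDerivAt_off_countable_of_le G _ Real.pi_pos.le hcount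
    hGcont.continuousOn (fun x hx => hasDerivAt_cos_mul_cosPhase_mul_exp β p hx.2)
    ((((hint (p + 1)).const_mul _).sub ((hint p).const_mul _)).const_mul I)
  have hGπ : G π = G 0 := by
    have : exp ((2 * p + 1) * π * I) = -1 := by
      rw [show ((2 * p + 1) * π * I : ℂ) = p * (2 * π * I) + π * I by ring, exp_add,
        exp_int_mul_two_pi_mul_I, exp_pi_mul_I, one_mul]
    simp [G, cosPhase, this]
  rw [hGπ, sub_self, intervalIntegral.integral_const_mul, intervalIntegral.integral_sub
    ((hint (p + 1)).const_mul _) ((hint p).const_mul _), intervalIntegral.integral_const_mul,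
    intervalIntegral.integral_const_mul, mul_eq_zero, sub_eq_zero] at hFTC
  exact hFTC.resolve_left I_ne_zero

theorem normSq_cosPhaseMoment_mul (p : ℤ) :
    normSq (cosPhaseMoment β p) * (p ^ 2 + β ^ 2) = normSq (cosPhaseMoment β 0) * β ^ 2 := by
  have hstep : ∀ q : ℤ, normSq (cosPhaseMoment β (q + 1)) * ((q + 1 : ℤ) ^ 2 + β ^ 2)
      = normSq (cosPhaseMoment β q) * (q ^ 2 + β ^ 2) := by
    intro q
    have h := congrArg normSq (cosPhaseMoment_recurrence β q)
    rw [normSq_mul, normSq_mul,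
      show ((q + 1 : ℂ) + β * I) = ((q + 1 : ℝ) : ℂ) + β * I by push_cast; rfl,
      show (β * I - q : ℂ) = ((-q : ℝ) : ℂ) + β * I by push_cast; ring, normSq_add_mul_I,
      normSq_add_mul_I] at h
    push_cast
    linear_combination h
  induction p using Int.induction_on with
  | zero => simp
  | succ q ih => rw [hstep, ih]
  | pred q ih => rw [← ih, ← hstep]; norm_num

theorem cosPhaseMoment_zero :
    cosPhaseMoment β 0 = betaIntegral (1 / 2) (1 / 2 + β * I) := by
  have hint : ∀ a b, IntervalIntegrable (cosPhase β) volume a b := fun a b => by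
    simpa using intervalIntegrable_mul_cosPhase β continuous_const (ψ := fun _ => 1) a b
  have hreflect : ∫ θ in π / 2..π, cosPhase β θ = ∫ θ in 0..π / 2, cosPhase β θ := by
    simpa [cosPhase_pi_sub, sub_half] using
      (intervalIntegral.integral_comp_sub_left (cosPhase β) π (a := 0) (b := π / 2)).symm
  have hpi : (0 : ℝ) ≤ π / 2 := by positivity
  rw [betaIntegral_eq_two_mul_integral_sin_cpow_mul_cos_cpow, cosPhaseMoment]
  simp only [Int.cast_zero, mul_zero, zero_mul, exp_zero, one_mul]
  rw [← intervalIntegral.integral_add_adjacent_intervals (hint 0 (π / 2)) (hint (π / 2) π),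
    hreflect, ← two_mul, intervalIntegral.integral_of_le hpi, intervalIntegral.integral_of_le hpi,
    integral_Ioc_eq_integral_Ioo, integral_Ioc_eq_integral_Ioo]
  congr 1
  refine setIntegral_congr_fun measurableSet_Ioo fun θ hθ => ?_
  rw [cosPhase_eq_cpow β (Real.cos_pos_of_mem_Ioo ⟨by linarith [hθ.1, Real.pi_pos], hθ.2⟩)]
  ring_nf
  simp

end cosPhaseMoment

theorem Ipb_eq_inv_pi_mul_cosPhaseMoment (p : ℤ) (β : ℝ) :
    Ipb p β = (π : ℂ)⁻¹ * cosPhaseMoment β p := by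
  set F := fun θ : ℝ => exp (2 * p * θ * I) * cosPhase β θ
  have hF : Ipb p β = ∫ t in (0 : ℝ)..1, F (2 * π * t) := by
    refine intervalIntegral.integral_congr fun t _ => ?_
    simp only [F, cosPhase, ← exp_add]
    push_cast
    ring_nf
  have hperiod := (exp_mul_cosPhase_periodic β p).intervalIntegral_add_zsmul_eq 2 0
    (intervalIntegrable_exp_mul_cosPhase β p)
  rw [zero_add, zero_add, two_zsmul, ← two_mul] at hperiod
  rw [hF, intervalIntegral.integral_comp_mul_left F (by positivity), mul_zero, mul_one, hperiod,
    cosPhaseMoment, zsmul_eq_mul, real_smul, ← mul_assoc]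
  congr 1
  push_cast
  field_simp

theorem abs_Ipb_sq (p : ℤ) (β : ℝ) (hβ : β ≠ 0) :
    ‖Ipb p β‖ ^ 2 = β * Real.tanh (Real.pi * β) / (Real.pi * ((p : ℝ) ^ 2 + β ^ 2))
      ∧ Ipb p β ≠ 0 := by
  have hmoment := normSq_cosPhaseMoment_mul β p
  rw [cosPhaseMoment_zero, normSq_betaIntegral_one_half hβ] at hmoment
  have hnorm : ‖Ipb p β‖ ^ 2 = β * Real.tanh (π * β) / (π * (p ^ 2 + β ^ 2)) := by
    rw [Ipb_eq_inv_pi_mul_cosPhaseMoment, Complex.sq_norm, normSq_mul, normSq_inv, normSq_ofReal]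
    field_simp at hmoment ⊢
    linear_combination hmoment
  refine ⟨hnorm, fun hzero => ?_⟩
  have hpos : 0 < β * Real.tanh (π * β) / (π * (p ^ 2 + β ^ 2)) :=
    div_pos (Real.mul_tanh_mul_pos hβ Real.pi_pos) (by positivity)
  rw [← hnorm, hzero, norm_zero] at hpos
  simp at hpos
end

section
/- The number (1/π)·arctan 2 is irrational. -/
open Complex Real

lemma aux_gauss (n : ℕ) :
    ¬ (5:ℤ) ∣ ((⟨1,2⟩:GaussianInt)^(n+1)).re ∧
      (5:ℤ) ∣ (((⟨1,2⟩:GaussianInt)^(n+1)).im - 2*((⟨1,2⟩:GaussianInt)^(n+1)).re) := by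
  induction n with
  | zero => norm_num
  | succ n ih =>
    obtain ⟨h1, h2⟩ := ih
    rw [pow_succ]
    simp only [Zsqrtd.re_mul, Zsqrtd.im_mul] at *
    constructor <;> omega

theorem irrational_arctan_two_div_pi : Irrational (Real.arctan 2 / Real.pi) := by
  rintro ⟨q, hq⟩
  have hπ := Real.pi_ne_zero
  have harc : Real.arctan 2 = (q : ℝ) * Real.pi := by
    field_simp at hq; linarith [hq]
  have hsqrt5 : Real.sqrt (1 + (2:ℝ)^2) = Real.sqrt 5 := by norm_num
  have h5 : ((Real.sqrt 5 : ℝ) : ℂ) ≠ 0 := by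
    simpa using (Real.sqrt_ne_zero' (x := 5)).2 (by norm_num)
  have hkey : (1 + 2*Complex.I : ℂ)
      = (Real.sqrt 5 : ℂ) * Complex.exp (Real.arctan 2 * Complex.I) := by
    rw [Complex.exp_mul_I, ← Complex.ofReal_cos, ← Complex.ofReal_sin,
      Real.cos_arctan, Real.sin_arctan, hsqrt5]
    push_cast
    field_simp
  set n : ℕ := q.den with hn
  have hnpos : 0 < n := q.pos
  have hnq : (n : ℝ) * (q : ℝ) = (q.num : ℝ) := by
    rw [mul_comm]; exact_mod_cast congrArg Rat.cast (Rat.mul_den_eq_num q)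
  have hC : (n : ℂ) * ((q : ℝ) : ℂ) = (q.num : ℂ) := by exact_mod_cast congrArg Complex.ofReal hnq
  have h2 : ((1:ℂ) + 2*Complex.I)^(2*n) = (5:ℂ)^n := by
    rw [hkey, mul_pow, ← Complex.exp_nat_mul]
    have e1 : ((Real.sqrt 5 : ℝ) : ℂ)^(2*n) = (5:ℂ)^n := by
      rw [pow_mul, ← Complex.ofReal_pow, Real.sq_sqrt (by norm_num : (5:ℝ) ≥ 0)]
      norm_num
    have e2 : ((2*n : ℕ) : ℂ) * ((Real.arctan 2 : ℝ) * Complex.I)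
        = (q.num : ℂ) * (2 * (Real.pi : ℂ) * Complex.I) := by
      have hC' : (n:ℂ) * (q:ℂ) = (q.num : ℂ) := by push_cast at hC ⊢; exact_mod_cast hC
      rw [harc]
      push_cast
      linear_combination (2*(Real.pi:ℂ)*Complex.I) * hC'
    rw [e1, e2, Complex.exp_int_mul_two_pi_mul_I, mul_one]
  -- transfer to Gaussian integers
  have hg : ((⟨1,2⟩ : GaussianInt)^(2*n) : GaussianInt) = ((5:ℤ) : GaussianInt)^n := by
    apply GaussianInt.toComplex_inj.mp
    rw [map_pow, map_pow]
    have t1 : GaussianInt.toComplex ⟨1,2⟩ = 1 + 2*Complex.I := by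
      rw [GaussianInt.toComplex_def]; norm_num
    have t2 : GaussianInt.toComplex (((5:ℤ) : GaussianInt)) = 5 := by
      rw [GaussianInt.toComplex_def]; norm_num
    rw [t1, t2, h2]
  obtain ⟨m, hm⟩ : ∃ m, 2*n = m + 1 := ⟨2*n - 1, by omega⟩
  obtain ⟨ha, hb⟩ := aux_gauss m
  rw [← hm, hg] at ha hb
  have him : (((5:ℤ) : GaussianInt)^n).im = 0 := by
    rw [← Int.cast_pow]; exact Zsqrtd.im_intCast _
  have hre : (((5:ℤ) : GaussianInt)^n).re = 5^n := by
    rw [← Int.cast_pow]; exact Zsqrtd.re_intCast _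
  rw [hre] at ha
  exact ha (dvd_pow_self 5 (by omega))
end

section
/- Let A ∈ ℝ^{d×d} and b ≥ 2. If σ(A) ∩ rS is nonempty for some r > 0 and contains a real eigenvalue λ with log_b|λ| rational, then there exists x ∈ ℝ^d \ {0} such that the sequence (xᵀ Aⁿ x) is neither b-Benford nor eventually zero. -/
open scoped Classical

/-- A real sequence is uniformly distributed mod 1. -/
def UDMod1 (x : ℕ → ℝ) : Prop :=
  ∀ a c : ℝ, 0 ≤ a → a ≤ c → c ≤ 1 →
    Filter.Tendsto
      (fun N : ℕ => (((Finset.Icc 1 N).filter fun n => Int.fract (x n) ∈ Set.Ico a c).card : ℝ) / N)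
      Filter.atTop (nhds (c - a))

/-- The base-`b` significand of `x`, with `signif b 0 = 0`. -/
noncomputable def signif (b : ℕ) (x : ℝ) : ℝ :=
  if x = 0 then 0 else (b : ℝ) ^ (Real.logb b |x| - (⌊Real.logb b |x|⌋ : ℝ))

/-- A real sequence is `b`-Benford. -/
def IsBenford (b : ℕ) (x : ℕ → ℝ) : Prop :=
  ∀ s : ℝ, 1 ≤ s → s < b →
    Filter.Tendsto
      (fun N : ℕ => (((Finset.Icc 1 N).filter fun n => signif b (x n) ≤ s).card : ℝ) / N)
      Filter.atTop (nhds (Real.logb b s))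

/-!
Let `x` be an eigenvector for `l`. Then `xᵀ Aⁿ x = lⁿ |x|²` never vanishes, and
`log_b |xᵀ Aⁿ x| = n log_b |l| + 2 log_b |x|`. If `log_b |l| = p / q`, shifting `n` by `q` shifts this
logarithm by the integer `p`, so the significands of the sequence are `q`-periodic and take only
finitely many values. A Benford sequence cannot do that: between two consecutive values `s₁ < s₂`
the counting proportions for `s₁` and `s₂` agree, whereas their limits `log_b s₁ < log_b s₂` differ.
-/

theorem Function.Periodic.finite_range {α : Type*} {f : ℕ → α} {q : ℕ} (hf : Function.Periodic f q)
    (hq : 0 < q) : (Set.range f).Finite :=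
  ((Set.finite_Iio q).image f).subset <| by
    rintro _ ⟨n, rfl⟩
    exact ⟨n % q, Nat.mod_lt n hq, hf.map_mod_nat n⟩

theorem signif_of_ne_zero (b : ℕ) {y : ℝ} (hy : y ≠ 0) :
    signif b y = (b : ℝ) ^ Int.fract (Real.logb b |y|) := by
  rw [signif, if_neg hy, Int.self_sub_floor]

theorem signif_mul_of_logb_abs_eq_intCast (b : ℕ) {t : ℝ} {m : ℤ} (ht : t ≠ 0)
    (hm : Real.logb b |t| = m) (y : ℝ) : signif b (t * y) = signif b y := by
  rcases eq_or_ne y 0 with rfl | hy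
  · rw [mul_zero]
  rw [signif_of_ne_zero b (mul_ne_zero ht hy), signif_of_ne_zero b hy, abs_mul,
    Real.logb_mul (abs_ne_zero.mpr ht) (abs_ne_zero.mpr hy), hm, add_comm, Int.fract_add_intCast]

theorem periodic_signif_geom_of_logb_abs_eq_ratCast (b : ℕ) {l : ℝ} (hl : l ≠ 0) {r : ℚ}
    (hr : Real.logb b |l| = r) (c : ℝ) :
    Function.Periodic (fun n : ℕ => signif b (l ^ n * c)) r.den := by
  intro n
  have hlog : Real.logb b |l ^ r.den| = r.num := by
    rw [abs_pow, Real.logb_pow, hr]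
    exact_mod_cast r.den_mul_eq_num
  simp only [pow_add, mul_comm (l ^ n), mul_assoc]
  exact signif_mul_of_logb_abs_eq_intCast b (pow_ne_zero _ hl) hlog _

theorem Set.Finite.exists_Ioc_disjoint {α : Type*} [LinearOrder α] [TopologicalSpace α]
    [OrderTopology α] [DenselyOrdered α] {F : Set α} (hF : F.Finite) {a c : α} (hac : a < c) :
    ∃ s₁ s₂, a < s₁ ∧ s₁ < s₂ ∧ s₂ < c ∧ Disjoint (Set.Ioc s₁ s₂) F := by
  obtain ⟨s₂, ⟨has₂, hs₂c⟩, hs₂F⟩ := ((Set.Ioo_infinite hac).sdiff hF).nonempty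
  have hnhds : F ᶜ ∩ Set.Ioi a ∈ nhds s₂ :=
    (hF.isClosed.isOpen_compl.inter isOpen_Ioi).mem_nhds ⟨hs₂F, has₂⟩
  obtain ⟨l, hls₂, hsub⟩ := exists_Ioc_subset_of_mem_nhds hnhds ⟨a, has₂⟩
  obtain ⟨s₁, hls₁, hs₁s₂⟩ := _root_.exists_between hls₂
  refine ⟨s₁, s₂, (hsub ⟨hls₁, hs₁s₂.le⟩).2, hs₁s₂, hs₂c, ?_⟩
  exact Set.disjoint_left.mpr fun y hy => (hsub ⟨hls₁.trans hy.1, hy.2⟩).1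

theorem not_isBenford_of_finite_range_signif {b : ℕ} (hb : 1 < b) {x : ℕ → ℝ}
    (hF : (Set.range fun n => signif b (x n)).Finite) : ¬ IsBenford b x := by
  intro hB
  have hb' : (1 : ℝ) < b := by exact_mod_cast hb
  obtain ⟨s₁, s₂, h1s₁, hs₁s₂, hs₂b, hdisj⟩ := hF.exists_Ioc_disjoint hb'
  have hcount : ∀ n, signif b (x n) ≤ s₁ ↔ signif b (x n) ≤ s₂ := fun n =>
    ⟨fun h => h.trans hs₁s₂.le, fun h => not_lt.mp fun h' =>
      Set.disjoint_left.mp hdisj ⟨h', h⟩ ⟨n, rfl⟩⟩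
  have h₁ := hB s₁ h1s₁.le (hs₁s₂.trans hs₂b)
  simp only [hcount] at h₁
  exact (Real.logb_lt_logb hb' (by linarith) hs₁s₂).ne
    (tendsto_nhds_unique h₁ (hB s₂ (h1s₁.trans hs₁s₂).le hs₂b))

theorem not_isBenford_geom_of_not_irrational_logb {b : ℕ} (hb : 1 < b) {l : ℝ} (hl : l ≠ 0)
    (hrat : ¬ Irrational (Real.logb b |l|)) (c : ℝ) : ¬ IsBenford b (fun n => l ^ n * c) := by
  obtain ⟨r, hr⟩ := not_not.mp hrat
  exact not_isBenford_of_finite_range_signif hb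
    ((periodic_signif_geom_of_logb_abs_eq_ratCast b hl hr.symm c).finite_range r.pos)

theorem Matrix.dotProduct_pow_mulVec_of_hasEigenvector {R d : Type*} [CommRing R] [Fintype d]
    [DecidableEq d] {A : Matrix d d R} {l : R} {x : d → R}
    (hx : Module.End.HasEigenvector (Matrix.toLin' A) l x) (n : ℕ) : dotProduct x ((A ^ n).mulVec x) = l ^ n * dotProduct x x := by
  rw [← Matrix.toLin'_apply, Matrix.toLin'_pow, hx.pow_apply, dotProduct_smul, smul_eq_mul]

theorem exists_not_benford_of_rational_log_eigenvalue (d : ℕ) (A : Matrix (Fin d) (Fin d) ℝ)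
    (b : ℕ) (hb : 2 ≤ b) (l : ℝ) (hl : l ≠ 0)
    (heig : Module.End.HasEigenvalue (Matrix.toLin' A) l)
    (hrat : ¬ Irrational (Real.logb b |l|)) :
    ∃ x : Fin d → ℝ, x ≠ 0 ∧
      ¬ IsBenford b (fun n => dotProduct x ((A ^ n).mulVec x)) ∧
      ¬ (∀ᶠ n in Filter.atTop, dotProduct x ((A ^ n).mulVec x) = 0) := by
  obtain ⟨x, hx⟩ := heig.exists_hasEigenvector
  have hseq := Matrix.dotProduct_pow_mulVec_of_hasEigenvector hx
  have hxx : dotProduct x x ≠ 0 := fun h => hx.2 (dotProduct_self_eq_zero.mp h)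
  refine ⟨x, hx.2, ?_, fun hzero => ?_⟩
  · simp only [hseq]
    exact not_isBenford_geom_of_not_irrational_logb hb hl hrat _
  · obtain ⟨n, hn⟩ := hzero.exists
    exact mul_ne_zero (pow_ne_zero n hl) hxx (hseq n ▸ hn)
end
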